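/- arXiv:2208.02083 — 5 statements merged into one kernel-verified Lean document; each statement's English description precedes it below -/
import Mathlib

section
/- Let f : ℝ^d → ℝ^d and suppose there exists an open set V ⊆ ℝ^d whose complement has Lebesgue measure zero such that f is continuously differentiable on V with det(f'(x)) ≠ 0 for all x ∈ V. Then for any set W ⊆ ℝ^d of Lebesgue measure zero, the preimage f⁻¹(W) also has Lebesgue measure zero. -/
open MeasureTheory
open scoped NNReal ENNReal

/-- If `f : ℝ^d → ℝ^d` is continuously differentiable with nonvanishing Jacobian determinant
on an open set `V` whose complement is Lebesgue null, then preimages under `f` of Lebesgue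
null sets are Lebesgue null. -/
theorem stmt_1 (d : ℕ) (f : EuclideanSpace ℝ (Fin d) → EuclideanSpace ℝ (Fin d))
    (V : Set (EuclideanSpace ℝ (Fin d))) (hV : IsOpen V) (hVc : volume Vᶜ = 0)
    (hf : ContDiffOn ℝ 1 f V)
    (hdet : ∀ x ∈ V, LinearMap.det ((fderiv ℝ f x) : EuclideanSpace ℝ (Fin d) →ₗ[ℝ] EuclideanSpace ℝ (Fin d)) ≠ 0)
    (W : Set (EuclideanSpace ℝ (Fin d))) (hW : volume W = 0) :
    volume (f ⁻¹' W) = 0 := by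
  set s : Set (EuclideanSpace ℝ (Fin d)) := V ∩ f ⁻¹' W with hs
  have hcov : f ⁻¹' W ⊆ s ∪ Vᶜ := by
    intro x hx
    by_cases h : x ∈ V
    · exact Or.inl ⟨h, hx⟩
    · exact Or.inr h
  rcases s.eq_empty_or_nonempty with hse | hse
  · refine measure_mono_null hcov ?_
    rw [hse, Set.empty_union]; exact hVc
  have hder : ∀ x ∈ s, HasFDerivWithinAt f (fderiv ℝ f x) s x := fun x hx =>
    (((hf.differentiableOn one_ne_zero).differentiableAt
      (hV.mem_nhds hx.1)).hasFDerivAt).hasFDerivWithinAt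
  -- choose δ per linear map A
  have H : ∀ A : EuclideanSpace ℝ (Fin d) →L[ℝ] EuclideanSpace ℝ (Fin d), ∃ δ : ℝ≥0, δ ≠ 0 ∧ (A.det ≠ 0 →
      ∀ (t : Set (EuclideanSpace ℝ (Fin d))) (g : EuclideanSpace ℝ (Fin d) → EuclideanSpace ℝ (Fin d)), ApproximatesLinearOn g A t δ →
        (((|A.det| / 2).toNNReal : ℝ≥0) : ℝ≥0∞) * volume t ≤ volume (g '' t)) := by
    intro A
    by_cases hA : A.det = 0
    · exact ⟨1, one_ne_zero, fun h => absurd hA h⟩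
    · have hdpos : 0 < |A.det| := abs_pos.mpr hA
      have hm : ((((|A.det| / 2).toNNReal : ℝ≥0)) : ℝ≥0∞) < ENNReal.ofReal |A.det| := by
        rw [show ((((|A.det| / 2).toNNReal : ℝ≥0)) : ℝ≥0∞) = ENNReal.ofReal (|A.det| / 2) from rfl]
        exact (ENNReal.ofReal_lt_ofReal_iff hdpos).mpr (by linarith)
      have := (MeasureTheory.mul_le_addHaar_image_of_lt_det volume A hm).and
        self_mem_nhdsWithin
      rcases this.exists with ⟨δ, hδ1, hδ2⟩
      exact ⟨δ, ne_of_gt hδ2, fun _ t g hg => hδ1 t g hg⟩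
  choose r hr0 hr using H
  obtain ⟨t, A, -, -, hst, happrox, hA⟩ :=
    exists_partition_approximatesLinearOn_of_hasFDerivWithinAt f s (fderiv ℝ f) hder r hr0
  have hnull : ∀ n, volume (s ∩ t n) = 0 := by
    intro n
    obtain ⟨y, hy, hAy⟩ := hA hse n
    have hdety : (A n).det ≠ 0 := by
      rw [hAy]; exact hdet y hy.1
    have himg : f '' (s ∩ t n) ⊆ W := by
      rintro _ ⟨x, hx, rfl⟩
      exact hx.1.2
    have h1 : (((|(A n).det| / 2).toNNReal : ℝ≥0) : ℝ≥0∞) * volume (s ∩ t n)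
        ≤ volume (f '' (s ∩ t n)) := hr (A n) hdety _ f (happrox n)
    have h2 : volume (f '' (s ∩ t n)) = 0 := measure_mono_null himg hW
    rw [h2, nonpos_iff_eq_zero] at h1
    have hmne : (((|(A n).det| / 2).toNNReal : ℝ≥0) : ℝ≥0∞) ≠ 0 := by
      simp only [ne_eq, ENNReal.coe_eq_zero, Real.toNNReal_eq_zero, not_le]
      positivity
    exact (mul_eq_zero.mp h1).resolve_left hmne
  have hs0 : volume s = 0 := by
    have : s ⊆ ⋃ n, s ∩ t n := fun x hx => by
      rcases Set.mem_iUnion.mp (hst hx) with ⟨n, hn⟩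
      exact Set.mem_iUnion.mpr ⟨n, hx, hn⟩
    refine measure_mono_null this ?_
    refine le_antisymm (le_trans (measure_iUnion_le _) ?_) zero_le
    simp [hnull]
  refine measure_mono_null hcov ?_
  refine le_antisymm (le_trans (measure_union_le _ _) ?_) zero_le
  rw [hs0, hVc, add_zero]
end

section
/- Let f : ℝ^d → ℝ^d be a function, S ⊆ {x : f(x) = x}, and suppose for each z ∈ S there is an open neighborhood U_z of z and a set G_z ⊆ ℝ^d of Lebesgue measure zero such that {x ∈ ℝ^d : f^k(x) ∈ U_z for all k ∈ ℕ₀} ⊆ G_z. Then there exists a set W ⊆ ℝ^d of Lebesgue measure zero such that { x ∈ ℝ^d : lim_{k→∞} f^k(x) exists and lies in S } ⊆ ⋃_{k∈ℕ₀} f^{−k}(W). -/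
/-!
A point whose orbit converges to `y ∈ S` eventually stays in the neighbourhood `U_z` of some
`z ∈ S` covering `y`; after `N` steps its whole orbit lies in `U_z`, so its `N`-th iterate
lies in the null set `G_z`. Since `S` is Lindelöf, countably many `U_z` cover it, and the
corresponding countably many `G_z` have a null union `W`.
-/

open MeasureTheory Filter Set

theorem Function.mem_iUnion_preimage_iterate_of_eventually_mem {X : Type*} {f : X → X}
    {U G : Set X} (hG : {x | ∀ k, f^[k] x ∈ U} ⊆ G) {x : X}
    (hx : ∀ᶠ k in atTop, f^[k] x ∈ U) : x ∈ ⋃ k, f^[k] ⁻¹' G := by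
  obtain ⟨N, hN⟩ := hx.exists_forall_of_atTop
  refine mem_iUnion.mpr ⟨N, hG fun k => ?_⟩
  rw [← Function.iterate_add_apply]
  exact hN (k + N) (Nat.le_add_left _ _)

theorem exists_null_tendsto_subset_iUnion_preimage_iterate {X : Type*} [TopologicalSpace X]
    [HereditarilyLindelofSpace X] [MeasurableSpace X] (μ : Measure X) (f : X → X) (S : Set X)
    (hloc : ∀ z ∈ S, ∃ U : Set X, IsOpen U ∧ z ∈ U ∧
      ∃ G : Set X, μ G = 0 ∧ {x | ∀ k : ℕ, f^[k] x ∈ U} ⊆ G) :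
    ∃ W : Set X, μ W = 0 ∧
      {x | ∃ y ∈ S, Tendsto (fun k => f^[k] x) atTop (nhds y)} ⊆ ⋃ k : ℕ, f^[k] ⁻¹' W := by
  choose! U hU_open hzU G hG_null hG using hloc
  obtain ⟨T, hT_count, hTS, hS_cover⟩ := (HereditarilyLindelofSpace.isLindelof S).elim_nhds_subcover
    U fun z hz => (hU_open z hz).mem_nhds (hzU z hz)
  refine ⟨⋃ z ∈ T, G z, (measure_biUnion_null_iff hT_count).mpr fun z hz => hG_null z (hTS z hz),
    ?_⟩
  rintro x ⟨y, hyS, hxy⟩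
  obtain ⟨z, hzT, hyU⟩ : ∃ z ∈ T, y ∈ U z := by simpa using hS_cover hyS
  have hx := Function.mem_iUnion_preimage_iterate_of_eventually_mem (hG z (hTS z hzT))
    (hxy ((hU_open z (hTS z hzT)).mem_nhds hyU))
  exact iUnion_mono (fun k => preimage_mono (subset_biUnion_of_mem hzT)) hx

theorem stmt_9_general (d : ℕ) (f : EuclideanSpace ℝ (Fin d) → EuclideanSpace ℝ (Fin d))
    (S : Set (EuclideanSpace ℝ (Fin d)))
    (hloc : ∀ z ∈ S, ∃ U : Set (EuclideanSpace ℝ (Fin d)), IsOpen U ∧ z ∈ U ∧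
      ∃ G : Set (EuclideanSpace ℝ (Fin d)), volume G = 0 ∧
        {x | ∀ k : ℕ, f^[k] x ∈ U} ⊆ G) :
    ∃ W : Set (EuclideanSpace ℝ (Fin d)), volume W = 0 ∧
      {x | ∃ y ∈ S, Tendsto (fun k => f^[k] x) atTop (nhds y)} ⊆
        ⋃ k : ℕ, f^[k] ⁻¹' W :=
  exists_null_tendsto_subset_iUnion_preimage_iterate volume f S hloc

/-- If every `z ∈ S` has an open neighborhood `U_z` such that the set of points whose entire
orbit stays in `U_z` is contained in a Lebesgue null set, then there is a null set `W` such
that the stable set of `S` is contained in `⋃_{k} f^{−k}(W)`. -/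
theorem stmt_9 (d : ℕ) (f : EuclideanSpace ℝ (Fin d) → EuclideanSpace ℝ (Fin d))
    (S : Set (EuclideanSpace ℝ (Fin d))) (hS : S ⊆ {x | f x = x})
    (hloc : ∀ z ∈ S, ∃ U : Set (EuclideanSpace ℝ (Fin d)), IsOpen U ∧ z ∈ U ∧
      ∃ G : Set (EuclideanSpace ℝ (Fin d)), volume G = 0 ∧
        {x | ∀ k : ℕ, f^[k] x ∈ U} ⊆ G) :
    ∃ W : Set (EuclideanSpace ℝ (Fin d)), volume W = 0 ∧
      {x | ∃ y ∈ S, Tendsto (fun k => f^[k] x) atTop (nhds y)} ⊆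
        ⋃ k : ℕ, f^[k] ⁻¹' W :=
  stmt_9_general d f S hloc
end

section
/- Let σ : ℝ → [0,1] be smooth with σ = 1 on (−∞,1], σ = 0 on [4,∞), and σ'(x) ∈ [−2/3, 0] for all x. For r > 0 define ρ_r(x) = x · σ(4‖x‖²/r²). Then the Frobenius norm of the Jacobian of ρ_r is bounded by 6√d at every point of ℝ^d, uniformly in r. -/
/-- For a smooth cutoff `σ` with `σ = 1` on `(−∞,1]`, `σ = 0` on `[4,∞)` and
`σ' ∈ [−2/3,0]`, the map `ρ_r(x) = σ(4‖x‖²/r²) • x` has Jacobian with Frobenius norm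
bounded by `6√d`, uniformly in `r > 0`. -/
theorem stmt_12 (d : ℕ) (σ : ℝ → ℝ) (hσ : ContDiff ℝ (⊤ : ℕ∞) σ)
    (hσ01 : ∀ x, σ x ∈ Set.Icc (0 : ℝ) 1)
    (hσ1 : ∀ x ≤ (1 : ℝ), σ x = 1)
    (hσ0 : ∀ x, (4 : ℝ) ≤ x → σ x = 0)
    (hσ' : ∀ x, deriv σ x ∈ Set.Icc (-(2 / 3) : ℝ) 0)
    (r : ℝ) (hr : 0 < r)
    (ρ : EuclideanSpace ℝ (Fin d) → EuclideanSpace ℝ (Fin d))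
    (hρ : ∀ x, ρ x = σ (4 * ‖x‖ ^ 2 / r ^ 2) • x) :
    ∀ x : EuclideanSpace ℝ (Fin d),
      Real.sqrt (∑ j : Fin d, ∑ i : Fin d,
          (fderiv ℝ ρ x (EuclideanSpace.single j 1) i) ^ 2)
        ≤ 6 * Real.sqrt d := by
  have hρeq : ρ = fun y => σ (4 * ‖y‖ ^ 2 / r ^ 2) • y := funext hρ
  subst hρeq
  intro x
  set u : ℝ := 4 * ‖x‖ ^ 2 / r ^ 2 with hu
  have hu0 : 0 ≤ u := by positivity
  -- derivative of the inner scalar function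
  have hnorm : HasFDerivAt (fun y : EuclideanSpace ℝ (Fin d) => ‖y‖ ^ 2)
      (2 • (innerSL ℝ x)) x := by
    simpa using (hasFDerivAt_id x).norm_sq
  have hh : HasFDerivAt (fun y : EuclideanSpace ℝ (Fin d) => 4 * ‖y‖ ^ 2 / r ^ 2)
      ((4 / r ^ 2) • (2 • (innerSL ℝ x))) x := by
    have h := hnorm.const_mul (4 / r ^ 2)
    have heq : (fun y : EuclideanSpace ℝ (Fin d) => 4 / r ^ 2 * ‖y‖ ^ 2)
        = fun y => 4 * ‖y‖ ^ 2 / r ^ 2 := by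
      funext y; ring
    rwa [heq] at h
  have hc : HasFDerivAt (fun y : EuclideanSpace ℝ (Fin d) => σ (4 * ‖y‖ ^ 2 / r ^ 2))
      (deriv σ u • ((4 / r ^ 2) • (2 • (innerSL ℝ x)))) x :=
    (((hσ.differentiable (by simp)) u).hasDerivAt).comp_hasFDerivAt x hh
  have hρ' : HasFDerivAt (fun y : EuclideanSpace ℝ (Fin d) => σ (4 * ‖y‖ ^ 2 / r ^ 2) • y)
      (σ u • ContinuousLinearMap.id ℝ _ +
        (deriv σ u • ((4 / r ^ 2) • (2 • (innerSL ℝ x)))).smulRight x) x := by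
    exact hc.smul (hasFDerivAt_id x)
  rw [hρ'.fderiv]
  set a : ℝ := deriv σ u * (8 / r ^ 2) with ha
  have hentry : ∀ (j i : Fin d),
      (((σ u • ContinuousLinearMap.id ℝ (EuclideanSpace ℝ (Fin d)) +
        (deriv σ u • ((4 / r ^ 2) • (2 • (innerSL ℝ x)))).smulRight x))
          (EuclideanSpace.single j 1)) i
      = a * x j * x i + σ u * (if i = j then 1 else 0) := by
    intro j i
    have hinner : (inner ℝ x (EuclideanSpace.single j (1 : ℝ)) : ℝ) = x j := by
      rw [EuclideanSpace.inner_single_right]; simp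
    simp only [ContinuousLinearMap.add_apply, ContinuousLinearMap.smul_apply,
      ContinuousLinearMap.id_apply, ContinuousLinearMap.smulRight_apply,
      innerSL_apply_apply, hinner]
    simp only [PiLp.add_apply, PiLp.smul_apply, smul_eq_mul, EuclideanSpace.single_apply, ha]
    ring_nf
  simp only [hentry]
  -- bound the Frobenius norm squared
  have ha0 : a ≤ 0 := by
    have := (hσ' u).2
    have hr2 : (0:ℝ) < 8 / r ^ 2 := by positivity
    exact mul_nonpos_of_nonpos_of_nonneg this hr2.le
  have hs0 : 0 ≤ σ u := (hσ01 u).1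
  have hs1 : σ u ≤ 1 := (hσ01 u).2
  have hS : ∑ i : Fin d, x i ^ 2 = ‖x‖ ^ 2 := by
    rw [EuclideanSpace.norm_eq]
    rw [Real.sq_sqrt (by positivity)]
    simp [sq_abs]
  have haS : |a| * ‖x‖ ^ 2 ≤ 16 / 3 := by
    rcases le_or_gt u 4 with h4 | h4
    · have hda : |deriv σ u| ≤ 2 / 3 := by
        rw [abs_le]
        exact ⟨by linarith [(hσ' u).1], by linarith [(hσ' u).2]⟩
      have hxu : 8 / r ^ 2 * ‖x‖ ^ 2 = 2 * u := by
        rw [hu]; field_simp; ring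
      have : |a| * ‖x‖ ^ 2 = |deriv σ u| * (2 * u) := by
        rw [ha, abs_mul, abs_of_pos (by positivity : (0:ℝ) < 8 / r ^ 2), mul_assoc, hxu]
      rw [this]
      calc |deriv σ u| * (2 * u) ≤ (2/3) * (2 * 4) := by
            apply mul_le_mul hda (by linarith) (by linarith) (by norm_num)
        _ ≤ 16 / 3 := by norm_num
    · have hd0 : deriv σ u = 0 := by
        have hev : σ =ᶠ[nhds u] fun _ => 0 := by
          filter_upwards [Ioi_mem_nhds h4] with y hy
          exact hσ0 y (le_of_lt hy)
        rw [hev.deriv_eq]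
        simp
      rw [ha, hd0]
      norm_num
  rcases Nat.eq_zero_or_pos d with hd | hd
  · subst hd
    simp
  -- sum bound
  have key : ∑ j : Fin d, ∑ i : Fin d,
      (a * x j * x i + σ u * (if i = j then (1:ℝ) else 0)) ^ 2 ≤ 36 * (d:ℝ) := by
    have step1 : ∀ (j i : Fin d),
        (a * x j * x i + σ u * (if i = j then (1:ℝ) else 0)) ^ 2
        ≤ (a * x j * x i) ^ 2 + (σ u) ^ 2 * (if i = j then (1:ℝ) else 0) := by
      intro j i
      by_cases h : i = j
      · subst h
        simp only [eq_self_iff_true, if_true, mul_one]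
        have hxx : 0 ≤ x i * x i := mul_self_nonneg _
        have ht : a * x i * x i ≤ 0 := by
          rw [mul_assoc]
          exact mul_nonpos_of_nonpos_of_nonneg ha0 hxx
        have hts : (a * x i * x i) * σ u ≤ 0 := mul_nonpos_of_nonpos_of_nonneg ht hs0
        nlinarith [hts]
      · simp [h]
    calc ∑ j : Fin d, ∑ i : Fin d,
          (a * x j * x i + σ u * (if i = j then (1:ℝ) else 0)) ^ 2
        ≤ ∑ j : Fin d, ∑ i : Fin d,
          ((a * x j * x i) ^ 2 + (σ u) ^ 2 * (if i = j then (1:ℝ) else 0)) := by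
          apply Finset.sum_le_sum; intro j _
          apply Finset.sum_le_sum; intro i _
          exact step1 j i
      _ = a ^ 2 * (‖x‖ ^ 2) ^ 2 + (σ u) ^ 2 * d := by
          simp only [Finset.sum_add_distrib]
          congr 1
          · have hsum : ∑ j : Fin d, ∑ i : Fin d, (a * x j * x i) ^ 2
                = a ^ 2 * ((∑ j : Fin d, x j ^ 2) * (∑ i : Fin d, x i ^ 2)) := by
              rw [Finset.sum_mul_sum, Finset.mul_sum]
              apply Finset.sum_congr rfl
              intro j _
              rw [Finset.mul_sum]
              apply Finset.sum_congr rfl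
              intro i _
              ring
            rw [hsum, hS]
            ring
          · have hdiag : ∀ j : Fin d,
                ∑ i : Fin d, (σ u) ^ 2 * (if i = j then (1:ℝ) else 0) = (σ u) ^ 2 := by
              intro j
              simp
            rw [Finset.sum_congr rfl fun j _ => hdiag j]
            simp [Finset.sum_const, mul_comm]
      _ ≤ (16/3) ^ 2 + 1 * d := by
          have h1 : (|a| * ‖x‖ ^ 2) ^ 2 = a ^ 2 * (‖x‖ ^ 2) ^ 2 := by
            rw [mul_pow, sq_abs]
          have h2 : (|a| * ‖x‖ ^ 2) ^ 2 ≤ (16/3) ^ 2 := by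
            apply pow_le_pow_left₀ (by positivity) haS
          have h3 : (σ u) ^ 2 ≤ 1 := by nlinarith
          have hd' : (0:ℝ) ≤ d := Nat.cast_nonneg d
          nlinarith
      _ ≤ 36 * d := by
          have hd1 : (1:ℝ) ≤ d := by exact_mod_cast hd
          nlinarith
  calc Real.sqrt (∑ j : Fin d, ∑ i : Fin d,
          (a * x j * x i + σ u * (if i = j then 1 else 0)) ^ 2)
      ≤ Real.sqrt (36 * d) := Real.sqrt_le_sqrt key
    _ = 6 * Real.sqrt d := by
        rw [show (36:ℝ) * d = 6^2 * d by norm_num, Real.sqrt_mul (by positivity),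
          Real.sqrt_sq (by norm_num)]
end

section
/- Let f : ℝ^d → ℝ^d be differentiable at a fixed point z = 0 with A = f'(0) block-diagonal as A = diag(B, C) where B has operator norm ≤ 1 and C is invertible with ‖C^{−1}‖ < 1. Write x = (x⁺, x⁻) according to the block decomposition and η(x) = f(x) − Ax. If x ∈ ℝ^d is such that ‖C^{−k}(f^k)⁻(x)‖ → 0 as k → ∞ and Σ_{i=1}^{∞} ‖C^{−i} η⁻(f^{i−1}(x))‖ < ∞, then x⁻ = −Σ_{i=1}^{∞} C^{−i} η⁻(f^{i−1}(x)), and moreover (f^k)⁻(x) = −Σ_{i=k+1}^{∞} C^{k−i} η⁻(f^{i−1}(x)) for all k ∈ ℕ₀. -/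
open Filter

set_option maxHeartbeats 1000000

/-- Solving for the unstable component: if `0` is a fixed point of `f` with block-diagonal
derivative `A = diag(B, C)`, `‖B‖ ≤ 1`, `C` invertible with `‖C⁻¹‖ < 1`, and
`η x = f x − A x`, then for any `x` with `‖C^{−k}(f^k)⁻(x)‖ → 0` and
`Σ_i ‖C^{−i} η⁻(f^{i−1}(x))‖ < ∞` one has `x⁻ = −Σ_{i=1}^∞ C^{−i} η⁻(f^{i−1}(x))` and
`(f^k)⁻(x) = −Σ_{i=k+1}^∞ C^{k−i} η⁻(f^{i−1}(x))` for all `k`. -/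
theorem stmt_16 (s t : ℕ)
    (B : EuclideanSpace ℝ (Fin s) →L[ℝ] EuclideanSpace ℝ (Fin s))
    (C : EuclideanSpace ℝ (Fin t) ≃L[ℝ] EuclideanSpace ℝ (Fin t))
    (hB : ‖B‖ ≤ 1)
    (hC : ‖(C.symm : EuclideanSpace ℝ (Fin t) →L[ℝ] EuclideanSpace ℝ (Fin t))‖ < 1)
    (f : EuclideanSpace ℝ (Fin s) × EuclideanSpace ℝ (Fin t) →
         EuclideanSpace ℝ (Fin s) × EuclideanSpace ℝ (Fin t))
    (hfix : f 0 = 0) (hdiff : DifferentiableAt ℝ f 0)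
    (A : EuclideanSpace ℝ (Fin s) × EuclideanSpace ℝ (Fin t) →L[ℝ]
         EuclideanSpace ℝ (Fin s) × EuclideanSpace ℝ (Fin t))
    (hAdef : A = B.prodMap (C : EuclideanSpace ℝ (Fin t) →L[ℝ] EuclideanSpace ℝ (Fin t)))
    (hA : fderiv ℝ f 0 = A)
    (η : EuclideanSpace ℝ (Fin s) × EuclideanSpace ℝ (Fin t) →
         EuclideanSpace ℝ (Fin s) × EuclideanSpace ℝ (Fin t))
    (hη : ∀ x, η x = f x - A x)
    (x : EuclideanSpace ℝ (Fin s) × EuclideanSpace ℝ (Fin t))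
    (hconv : Tendsto (fun k : ℕ =>
      (((C.symm : EuclideanSpace ℝ (Fin t) →L[ℝ] EuclideanSpace ℝ (Fin t)) ^ k)
        ((f^[k] x).2))) atTop (nhds 0))
    (hsum : Summable (fun i : ℕ =>
      ‖((C.symm : EuclideanSpace ℝ (Fin t) →L[ℝ] EuclideanSpace ℝ (Fin t)) ^ (i + 1))
        ((η (f^[i] x)).2)‖)) :
    x.2 = -∑' i : ℕ,
        ((C.symm : EuclideanSpace ℝ (Fin t) →L[ℝ] EuclideanSpace ℝ (Fin t)) ^ (i + 1))
          ((η (f^[i] x)).2) ∧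
    ∀ k : ℕ, (f^[k] x).2 = -∑' j : ℕ,
        ((C.symm : EuclideanSpace ℝ (Fin t) →L[ℝ] EuclideanSpace ℝ (Fin t)) ^ (j + 1))
          ((η (f^[k + j] x)).2) := by
  set D : EuclideanSpace ℝ (Fin t) →L[ℝ] EuclideanSpace ℝ (Fin t) := (C.symm : EuclideanSpace ℝ (Fin t) →L[ℝ] EuclideanSpace ℝ (Fin t)) with hD
  set Cc : EuclideanSpace ℝ (Fin t) →L[ℝ] EuclideanSpace ℝ (Fin t) := (C : EuclideanSpace ℝ (Fin t) →L[ℝ] EuclideanSpace ℝ (Fin t)) with hCc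
  set g : ℕ → EuclideanSpace ℝ (Fin t) := fun i => (D ^ (i + 1)) ((η (f^[i] x)).2) with hg
  set a : ℕ → EuclideanSpace ℝ (Fin t) := fun k => (D ^ k) ((f^[k] x).2) with ha
  have hDC : ∀ v, D (Cc v) = v := fun v => C.symm_apply_apply v
  have hCD : ∀ v, Cc (D v) = v := fun v => C.apply_symm_apply v
  have hstep : ∀ k, a (k + 1) = a k + g k := by
    intro k
    have hfy : (f (f^[k] x)).2 = Cc ((f^[k] x).2) + (η (f^[k] x)).2 := by
      have h2 : f (f^[k] x) = A (f^[k] x) + η (f^[k] x) := by rw [hη]; abel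
      rw [h2, hAdef]; rfl
    show (D ^ (k+1)) ((f^[k+1] x).2) = (D ^ k) ((f^[k] x).2) + (D ^ (k+1)) ((η (f^[k] x)).2)
    rw [Function.iterate_succ_apply', hfy, map_add, pow_succ]
    simp only [ContinuousLinearMap.mul_apply, hDC]
  have htel : ∀ k n, a (k + n) = a k + ∑ i ∈ Finset.range n, g (k + i) := by
    intro k n
    induction n with
    | zero => simp
    | succ n ih =>
      calc a (k + (n + 1)) = a (k + n) + g (k + n) := by
            rw [← add_assoc]; exact hstep (k + n)
        _ = a k + ∑ i ∈ Finset.range (n + 1), g (k + i) := by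
            rw [ih, Finset.sum_range_succ, add_assoc]
  have hsumg : ∀ k, Summable (fun j => g (k + j)) := by
    intro k
    have h1 : Summable (fun j => ‖g (j + k)‖) := (summable_nat_add_iff k).2 hsum
    have h2 : Summable (fun j => ‖g (k + j)‖) := by simpa [add_comm] using h1
    exact h2.of_norm
  have hak : ∀ k, a k = -∑' j, g (k + j) := by
    intro k
    have hS := (hsumg k).hasSum.tendsto_sum_nat
    have h1 : Tendsto (fun n => a k + ∑ i ∈ Finset.range n, g (k + i)) atTop
        (nhds (a k + ∑' j, g (k + j))) := tendsto_const_nhds.add hS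
    have h2 : Tendsto (fun n => a (k + n)) atTop (nhds 0) :=
      (hconv.comp (tendsto_add_atTop_nat k)).congr fun n => congrArg a (add_comm n k)
    have h3 : Tendsto (fun n => a k + ∑ i ∈ Finset.range n, g (k + i)) atTop (nhds 0) :=
      h2.congr fun n => htel k n
    exact eq_neg_of_add_eq_zero_left (tendsto_nhds_unique h1 h3)
  have hCkD : ∀ k m v, (Cc ^ k) ((D ^ (k + m)) v) = (D ^ m) v := by
    intro k
    induction k with
    | zero => simp
    | succ k ih =>
      intro m v
      have h1 : (Cc ^ (k + 1)) ((D ^ (k + 1 + m)) v)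
          = (Cc ^ k) (Cc ((D ^ (k + m + 1)) v)) := by
        rw [pow_succ, show k + 1 + m = k + m + 1 from by omega]
        rfl
      rw [h1, pow_succ']
      simp only [ContinuousLinearMap.mul_apply, hCD]
      exact ih m v
  constructor
  · have h0 := hak 0
    simpa [ha, hg] using h0
  · intro k
    have h1 : (f^[k] x).2 = (Cc ^ k) (a k) := by
      have h2 := hCkD k 0 ((f^[k] x).2)
      simpa [ha] using h2.symm
    rw [h1, hak k, map_neg, ContinuousLinearMap.map_tsum _ (hsumg k)]
    congr 1
    refine tsum_congr fun j => ?_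
    have h3 := hCkD k (j + 1) ((η (f^[k + j] x)).2)
    rw [← add_assoc, pow_succ] at h3
    simpa [add_assoc, hg] using h3
end

section
/- Let f : ℝ^d → ℝ^d satisfy: z is a fixed point of f, f is differentiable at z, A = f'(z) is diagonalizable over ℝ with an eigenvalue of absolute value strictly greater than 1, and for every ε > 0 there is r_ε > 0 such that x ↦ f(x) − z − A(x−z) is ε-Lipschitz on B_{r_ε}(z). Let E^{cs} be the span of eigenvectors of A with eigenvalues in [−1,1] and E^u the span of eigenvectors with eigenvalues outside [−1,1]. Then there exist r > 0 and a Lipschitz continuous map Ψ : E^{cs} → E^u such that {x ∈ ℝ^d : f^k(x) ∈ B_r(z) for all k ∈ ℕ₀} ⊆ Graph(Ψ), where the graph is taken in the decomposition ℝ^d = E^{cs} ⊕ E^u (shifted to be centered at z). -/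
open Finset

set_option maxHeartbeats 3000000 in
/-- Center-stable Lipschitz manifold theorem: if `z` is a fixed point of `f`, `f` is
differentiable at `z` with `A = f'(z)` diagonalizable over `ℝ` possessing an eigenvalue of
absolute value `> 1`, and the first-order Taylor remainder at `z` is `ε`-Lipschitz on a
ball of some radius `r_ε` for every `ε > 0`, then there are `r > 0` and a Lipschitz map
`Ψ : E^{cs} → E^u` (between the center-stable and unstable spaces of `A`) whose (shifted)
graph contains every point whose whole orbit stays in `B_r(z)`. -/
theorem stmt_19 (d : ℕ) (f : EuclideanSpace ℝ (Fin d) → EuclideanSpace ℝ (Fin d))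
    (z : EuclideanSpace ℝ (Fin d)) (hfix : f z = z) (hdiff : DifferentiableAt ℝ f z)
    (A : EuclideanSpace ℝ (Fin d) →L[ℝ] EuclideanSpace ℝ (Fin d)) (hA : A = fderiv ℝ f z)
    (b : Module.Basis (Fin d) ℝ (EuclideanSpace ℝ (Fin d))) (lam : Fin d → ℝ)
    (heig : ∀ i, A (b i) = lam i • b i)
    (hunstable : ∃ i, 1 < |lam i|)
    (hrem : ∀ ε : ℝ, 0 < ε → ∃ rε : ℝ, 0 < rε ∧
      ∀ x ∈ Metric.closedBall z rε, ∀ y ∈ Metric.closedBall z rε,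
        ‖(f x - z - A (x - z)) - (f y - z - A (y - z))‖ ≤ ε * ‖x - y‖) :
    ∃ r : ℝ, 0 < r ∧
      ∃ Ψ : (Submodule.span ℝ (b '' {i : Fin d | |lam i| ≤ 1}) :
              Submodule ℝ (EuclideanSpace ℝ (Fin d))) →
            (Submodule.span ℝ (b '' {i : Fin d | 1 < |lam i|}) :
              Submodule ℝ (EuclideanSpace ℝ (Fin d))),
        (∃ K : NNReal, LipschitzWith K Ψ) ∧
        ∀ x : EuclideanSpace ℝ (Fin d),
          (∀ k : ℕ, f^[k] x ∈ Metric.closedBall z r) →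
          ∃ y : (Submodule.span ℝ (b '' {i : Fin d | |lam i| ≤ 1}) :
              Submodule ℝ (EuclideanSpace ℝ (Fin d))),
            x - z = (y : EuclideanSpace ℝ (Fin d)) + (Ψ y : EuclideanSpace ℝ (Fin d)) := by
  classical
  -- coordinates
  set c : EuclideanSpace ℝ (Fin d) → Fin d → ℝ := fun v => b.equivFun v with hc
  have hc_sub : ∀ v w i, c (v - w) i = c v i - c w i := by
    intro v w i; simp [hc, map_sub]
  have hc_add : ∀ v w i, c (v + w) i = c v i + c w i := by
    intro v w i; simp [hc, map_add]
  -- index sets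
  set σf : Finset (Fin d) := Finset.univ.filter (fun i => |lam i| ≤ 1) with hσf
  set τf : Finset (Fin d) := Finset.univ.filter (fun i => ¬ |lam i| ≤ 1) with hτf
  have hmemσ : ∀ i, i ∈ σf ↔ |lam i| ≤ 1 := by intro i; simp [hσf]
  have hmemτ : ∀ i, i ∈ τf ↔ 1 < |lam i| := by intro i; simp [hτf]
  -- adapted seminorms
  set ncs : EuclideanSpace ℝ (Fin d) → ℝ := fun v => ∑ i ∈ σf, |c v i| with hncs
  set nuu : EuclideanSpace ℝ (Fin d) → ℝ := fun v => ∑ i ∈ τf, |c v i| with hnuu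
  have hncs0 : ∀ v, 0 ≤ ncs v := fun v => Finset.sum_nonneg fun _ _ => abs_nonneg _
  have hnuu0 : ∀ v, 0 ≤ nuu v := fun v => Finset.sum_nonneg fun _ _ => abs_nonneg _
  have hle_nuu : ∀ (v : EuclideanSpace ℝ (Fin d)), ∀ i ∈ τf, |c v i| ≤ nuu v := by
    intro v i hi
    exact Finset.single_le_sum (f := fun j => |c v j|) (fun _ _ => abs_nonneg _) hi
  -- subadditivity
  have htri : ∀ (s : Finset (Fin d)) (v w : EuclideanSpace ℝ (Fin d)),
      ∑ i ∈ s, |c (v + w) i| ≤ ∑ i ∈ s, |c v i| + ∑ i ∈ s, |c w i| := by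
    intro s v w
    rw [← Finset.sum_add_distrib]
    refine Finset.sum_le_sum fun i _ => ?_
    rw [hc_add]; exact abs_add_le _ _
  -- coordinate bound  |c v i| ≤ M ‖v‖
  obtain ⟨M, hM0, hM⟩ : ∃ M : ℝ, 0 < M ∧ ∀ (v : EuclideanSpace ℝ (Fin d)) i,
      |c v i| ≤ M * ‖v‖ := by
    set L : EuclideanSpace ℝ (Fin d) →L[ℝ] (Fin d → ℝ) :=
      LinearMap.toContinuousLinearMap b.equivFun.toLinearMap with hL
    refine ⟨‖L‖ + 1, by positivity, fun v i => ?_⟩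
    have h1 : |c v i| ≤ ‖L v‖ := by
      have := norm_le_pi_norm (L v) i
      simpa [hL, hc, Real.norm_eq_abs] using this
    calc |c v i| ≤ ‖L v‖ := h1
      _ ≤ ‖L‖ * ‖v‖ := L.le_opNorm v
      _ ≤ (‖L‖ + 1) * ‖v‖ := by nlinarith [norm_nonneg v, norm_nonneg L]
  -- ‖v‖ ≤ C (ncs v + nuu v)
  obtain ⟨C, hC0, hC⟩ : ∃ C : ℝ, 0 < C ∧ ∀ v : EuclideanSpace ℝ (Fin d),
      ‖v‖ ≤ C * (ncs v + nuu v) := by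
    set B0 : ℝ := (∑ j, ‖b j‖) + 1 with hB0
    have hB0pos : 0 < B0 := by positivity
    refine ⟨B0, hB0pos, fun v => ?_⟩
    have h1 : ‖v‖ ≤ ∑ i, |c v i| * B0 := by
      calc ‖v‖ = ‖∑ i, c v i • b i‖ := by rw [show ∑ i, c v i • b i = v from b.sum_equivFun v]
        _ ≤ ∑ i, ‖c v i • b i‖ := norm_sum_le _ _
        _ ≤ ∑ i, |c v i| * B0 := by
            refine Finset.sum_le_sum fun i _ => ?_
            rw [norm_smul, Real.norm_eq_abs]
            refine mul_le_mul_of_nonneg_left ?_ (abs_nonneg _)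
            have : ‖b i‖ ≤ ∑ j, ‖b j‖ :=
              Finset.single_le_sum (fun j _ => norm_nonneg _) (Finset.mem_univ i)
            linarith
    have h2 : ∑ i, |c v i| = ncs v + nuu v := by
      rw [hncs, hnuu]
      exact (Finset.sum_filter_add_sum_filter_not Finset.univ _ _).symm
    calc ‖v‖ ≤ ∑ i, |c v i| * B0 := h1
      _ = (ncs v + nuu v) * B0 := by rw [← Finset.sum_mul, h2]
      _ = B0 * (ncs v + nuu v) := mul_comm _ _
  -- ∑-norm bounds
  have hsum_le : ∀ (s : Finset (Fin d)) (v : EuclideanSpace ℝ (Fin d)),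
      ∑ i ∈ s, |c v i| ≤ (d : ℝ) * (M * ‖v‖) := by
    intro s v
    calc ∑ i ∈ s, |c v i| ≤ ∑ _i ∈ s, M * ‖v‖ := Finset.sum_le_sum fun i _ => hM v i
      _ = (s.card : ℝ) * (M * ‖v‖) := by rw [Finset.sum_const, nsmul_eq_mul]
      _ ≤ (d : ℝ) * (M * ‖v‖) := by
          refine mul_le_mul_of_nonneg_right ?_ (by positivity)
          exact_mod_cast (Finset.card_le_univ s).trans_eq (by simp)
  -- action of A on coordinates
  have hcA : ∀ (v : EuclideanSpace ℝ (Fin d)) i, c (A v) i = lam i * c v i := by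
    intro v i
    have hAv : A v = b.equivFun.symm (fun j => lam j * b.equivFun v j) := by
      rw [Module.Basis.equivFun_symm_apply]
      conv_lhs => rw [← b.sum_equivFun v]
      rw [map_sum]
      refine Finset.sum_congr rfl fun j _ => ?_
      rw [map_smul, heig j, smul_smul, mul_comm]
    simp only [hc]
    rw [hAv, LinearEquiv.apply_symm_apply]
  -- unstable expansion constant
  have hτne : τf.Nonempty := by
    obtain ⟨i, hi⟩ := hunstable; exact ⟨i, (hmemτ i).2 hi⟩
  set μ : ℝ := τf.inf' hτne (fun i => |lam i|) with hμ
  have hμ1 : 1 < μ := by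
    rw [hμ, Finset.lt_inf'_iff]
    intro i hi; exact (hmemτ i).1 hi
  have hμle : ∀ i ∈ τf, μ ≤ |lam i| := fun i hi => Finset.inf'_le _ hi
  have hμ0 : 0 < μ := lt_trans one_pos hμ1
  -- seminorm estimates for A
  have hAcs : ∀ v, ncs (A v) ≤ ncs v := by
    intro v
    refine Finset.sum_le_sum fun i hi => ?_
    rw [hcA, abs_mul]
    have := (hmemσ i).1 hi
    nlinarith [abs_nonneg (c v i), abs_nonneg (lam i)]
  have hAu : ∀ v, μ * nuu v ≤ nuu (A v) := by
    intro v
    rw [hnuu]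
    simp only
    rw [Finset.mul_sum]
    refine Finset.sum_le_sum fun i hi => ?_
    rw [hcA, abs_mul]
    exact mul_le_mul_of_nonneg_right (hμle i hi) (abs_nonneg _)
  -- choose ε and the radius r
  set ε : ℝ := (μ - 1) / (4 * d * M * C + 4) with hε
  have hden : (0:ℝ) < 4 * d * M * C + 4 := by positivity
  have hε0 : 0 < ε := div_pos (by linarith) hden
  set K : ℝ := 2 * d * M * C * ε with hK
  have hK0 : 0 ≤ K := by positivity
  have hKle : K ≤ (μ - 1) / 2 := by
    rw [hK, hε, ← mul_div_assoc]
    rw [div_le_div_iff₀ hden (by norm_num : (0:ℝ) < 2)]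
    nlinarith [mul_nonneg (mul_nonneg (Nat.cast_nonneg d) hM0.le) hC0.le, hμ1]
  set θ : ℝ := (1 + μ) / 2 with hθ
  have hθ1 : 1 < θ := by rw [hθ]; linarith
  have hθK1 : 1 + K ≤ θ := by rw [hθ]; linarith [hKle]
  have hθK2 : θ ≤ μ - K := by rw [hθ]; linarith [hKle]
  obtain ⟨r, hr0, hrL⟩ := hrem ε hε0
  refine ⟨r, hr0, ?_⟩
  -- remainder map
  set N : EuclideanSpace ℝ (Fin d) → EuclideanSpace ℝ (Fin d) :=
    fun v => f v - z - A (v - z) with hN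
  have hstep : ∀ x y : EuclideanSpace ℝ (Fin d), f x - f y = A (x - y) + (N x - N y) := by
    intro x y
    have h1 : A (x - y) = A (x - z) - A (y - z) := by rw [← map_sub]; congr 1; abel
    rw [h1, hN]; simp only; abel
  set S : Set (EuclideanSpace ℝ (Fin d)) := {x | ∀ k, f^[k] x ∈ Metric.closedBall z r} with hS
  -- the cone estimate
  have cone : ∀ x ∈ S, ∀ y ∈ S, nuu (x - y) ≤ ncs (x - y) := by
    intro x hx y hy
    by_contra hcon
    push_neg at hcon
    set w : ℕ → EuclideanSpace ℝ (Fin d) := fun k => f^[k] x - f^[k] y with hw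
    have hw0cs : ncs (w 0) < nuu (w 0) := by simpa [hw] using hcon
    have hw0pos : 0 < nuu (w 0) := lt_of_le_of_lt (hncs0 _) hw0cs
    have hrec : ∀ k, w (k + 1) = A (w k) + (N (f^[k] x) - N (f^[k] y)) := by
      intro k
      rw [hw]; simp only [Function.iterate_succ_apply']
      exact hstep _ _
    have hΔb : ∀ k, ‖N (f^[k] x) - N (f^[k] y)‖ ≤ ε * ‖w k‖ := by
      intro k
      have h1 := hrL (f^[k] x) (hx k) (f^[k] y) (hy k)
      simpa [hN, hw] using h1
    have hwnorm : ∀ k, ncs (w k) ≤ nuu (w k) → ‖w k‖ ≤ 2 * C * nuu (w k) := by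
      intro k hk
      calc ‖w k‖ ≤ C * (ncs (w k) + nuu (w k)) := hC _
        _ ≤ C * (nuu (w k) + nuu (w k)) := by nlinarith
        _ = 2 * C * nuu (w k) := by ring
    have hΔnu : ∀ (k) (s : Finset (Fin d)), ncs (w k) ≤ nuu (w k) →
        ∑ i ∈ s, |c (N (f^[k] x) - N (f^[k] y)) i| ≤ K * nuu (w k) := by
      intro k s hk
      calc ∑ i ∈ s, |c (N (f^[k] x) - N (f^[k] y)) i|
          ≤ (d : ℝ) * (M * ‖N (f^[k] x) - N (f^[k] y)‖) := hsum_le _ _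
        _ ≤ (d : ℝ) * (M * (ε * ‖w k‖)) :=
            mul_le_mul_of_nonneg_left
              (mul_le_mul_of_nonneg_left (hΔb k) hM0.le) (Nat.cast_nonneg d)
        _ ≤ (d : ℝ) * (M * (ε * (2 * C * nuu (w k)))) :=
            mul_le_mul_of_nonneg_left (mul_le_mul_of_nonneg_left
              (mul_le_mul_of_nonneg_left (hwnorm k hk) hε0.le) hM0.le) (Nat.cast_nonneg d)
        _ = K * nuu (w k) := by rw [hK]; ring
    have key : ∀ k, ncs (w k) ≤ nuu (w k) ∧ θ ^ k * nuu (w 0) ≤ nuu (w k) := by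
      intro k
      induction k with
      | zero => exact ⟨hw0cs.le, by rw [pow_zero, one_mul]⟩
      | succ k ih =>
        obtain ⟨h1, h2⟩ := ih
        have hΔn : nuu (N (f^[k] x) - N (f^[k] y)) ≤ K * nuu (w k) := hΔnu k τf h1
        have hΔc : ncs (N (f^[k] x) - N (f^[k] y)) ≤ K * nuu (w k) := hΔnu k σf h1
        set Δ : EuclideanSpace ℝ (Fin d) := N (f^[k] x) - N (f^[k] y) with hΔdef
        have hup : θ * nuu (w k) ≤ nuu (w (k + 1)) := by
          have hAw : nuu (A (w k)) ≤ nuu (w (k + 1)) + nuu Δ := by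
            have he : (A (w k) : EuclideanSpace ℝ (Fin d)) = w (k + 1) + (-Δ) := by
              rw [hrec k, hΔdef]; abel
            have hneg : nuu (-Δ) = nuu Δ := by
              rw [hnuu]; simp only
              refine Finset.sum_congr rfl fun i _ => ?_
              have : c (-Δ) i = - c Δ i := by simp [hc, map_neg]
              rw [this, abs_neg]
            calc nuu (A (w k)) = nuu (w (k + 1) + (-Δ)) := by rw [he]
              _ ≤ nuu (w (k + 1)) + nuu (-Δ) := htri _ _ _
              _ = nuu (w (k + 1)) + nuu Δ := by rw [hneg]
          have := hAu (w k)
          nlinarith [hθK2, hnuu0 (w k)]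
        have hdown : ncs (w (k + 1)) ≤ nuu (w (k + 1)) := by
          have h5 : ncs (w (k + 1)) ≤ ncs (A (w k)) + ncs Δ := by
            rw [hrec k]; exact htri _ _ _
          have h3 := hAcs (w k)
          have h4 : ncs (w (k + 1)) ≤ (1 + K) * nuu (w k) := by nlinarith
          calc ncs (w (k + 1)) ≤ (1 + K) * nuu (w k) := h4
            _ ≤ θ * nuu (w k) := mul_le_mul_of_nonneg_right hθK1 (hnuu0 _)
            _ ≤ nuu (w (k + 1)) := hup
        refine ⟨hdown, ?_⟩
        calc θ ^ (k + 1) * nuu (w 0) = θ * (θ ^ k * nuu (w 0)) := by ring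
          _ ≤ θ * nuu (w k) := mul_le_mul_of_nonneg_left h2 (by linarith : (0:ℝ) ≤ θ)
          _ ≤ nuu (w (k + 1)) := hup
    have hbdd : ∀ k, nuu (w k) ≤ (d : ℝ) * (M * (2 * r)) := by
      intro k
      have h1 : ‖w k‖ ≤ 2 * r := by
        have ha := hx k; have hb := hy k
        rw [Metric.mem_closedBall, dist_eq_norm] at ha hb
        calc ‖w k‖ = ‖(f^[k] x - z) + (z - f^[k] y)‖ := by rw [hw]; congr 1; abel
          _ ≤ ‖f^[k] x - z‖ + ‖z - f^[k] y‖ := norm_add_le _ _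
          _ ≤ r + r := by
              rw [show ‖z - f^[k] y‖ = ‖f^[k] y - z‖ from norm_sub_rev _ _]
              exact add_le_add ha hb
          _ = 2 * r := by ring
      calc nuu (w k) ≤ (d : ℝ) * (M * ‖w k‖) := hsum_le _ _
        _ ≤ (d : ℝ) * (M * (2 * r)) :=
            mul_le_mul_of_nonneg_left (mul_le_mul_of_nonneg_left h1 hM0.le) (Nat.cast_nonneg d)
    obtain ⟨n, hn⟩ := pow_unbounded_of_one_lt ((d : ℝ) * (M * (2 * r)) / nuu (w 0)) hθ1
    have hkey := (key n).2
    rw [div_lt_iff₀ hw0pos] at hn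
    nlinarith [hbdd n]
  -- projections
  set Pc : EuclideanSpace ℝ (Fin d) → EuclideanSpace ℝ (Fin d) :=
    fun v => ∑ i ∈ σf, c v i • b i with hPc
  set Pu : EuclideanSpace ℝ (Fin d) → EuclideanSpace ℝ (Fin d) :=
    fun v => ∑ i ∈ τf, c v i • b i with hPu
  have hsplit : ∀ v, Pc v + Pu v = v := by
    intro v
    rw [hPc, hPu]
    simp only
    rw [Finset.sum_filter_add_sum_filter_not Finset.univ _ (fun i => c v i • b i)]
    exact b.sum_equivFun v
  have hcoP : ∀ (s : Finset (Fin d)) (v : EuclideanSpace ℝ (Fin d)) i,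
      c (∑ j ∈ s, c v j • b j) i = if i ∈ s then c v i else 0 := by
    intro s v i
    simp only [hc, map_sum, map_smul]
    have hterm : ∀ j, (c v j • b.equivFun (b j)) i = c v j * (if j = i then 1 else 0) := by
      intro j; rw [Pi.smul_apply, b.equivFun_self, smul_eq_mul]
    calc (∑ j ∈ s, c v j • b.equivFun (b j)) i
        = ∑ j ∈ s, (c v j • b.equivFun (b j)) i := by rw [Finset.sum_apply]
      _ = ∑ j ∈ s, c v j * (if j = i then 1 else 0) := Finset.sum_congr rfl fun j _ => hterm j
      _ = if i ∈ s then c v i else 0 := by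
          simp only [mul_ite, mul_one, mul_zero]
          rw [Finset.sum_ite_eq' s i (fun j => c v j)]
  have hcoPc : ∀ (v : EuclideanSpace ℝ (Fin d)) i,
      c (Pc v) i = if i ∈ σf then c v i else 0 := by
    intro v i; simp only [hPc]; exact hcoP σf v i
  have hcoPu : ∀ (v : EuclideanSpace ℝ (Fin d)) i,
      c (Pu v) i = if i ∈ τf then c v i else 0 := by
    intro v i; simp only [hPu]; exact hcoP τf v i
  -- the invariant set's projection, and the graph function via choice
  set D : Set (EuclideanSpace ℝ (Fin d)) := {v | ∃ x, x ∈ S ∧ Pc (x - z) = v} with hD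
  set G : EuclideanSpace ℝ (Fin d) → EuclideanSpace ℝ (Fin d) := fun v =>
    if h : ∃ x, x ∈ S ∧ Pc (x - z) = v then Pu (h.choose - z) else 0 with hG
  -- rigidity: σf-coordinates determine τf-coordinates on S
  have hrigid : ∀ x ∈ S, ∀ x' ∈ S, Pc (x - z) = Pc (x' - z) →
      ∀ i ∈ τf, c (x - z) i = c (x' - z) i := by
    intro x hx x' hx' hPeq i hi
    have hxx : (x - x' : EuclideanSpace ℝ (Fin d)) = (x - z) - (x' - z) := by abel
    have hcs0 : ncs (x - x') = 0 := by
      rw [hncs]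
      refine Finset.sum_eq_zero fun j hj => ?_
      have h1 : c (Pc (x - z)) j = c (x - z) j := by rw [hcoPc]; simp [hj]
      have h2 : c (Pc (x' - z)) j = c (x' - z) j := by rw [hcoPc]; simp [hj]
      have h3 : c (x - z) j = c (x' - z) j := by rw [← h1, ← h2, hPeq]
      have h4 : c (x - x') j = 0 := by rw [hxx, hc_sub, h3, sub_self]
      rw [h4, abs_zero]
    have h3 : nuu (x - x') ≤ 0 := by
      have := cone x hx x' hx'
      rw [hcs0] at this; exact this
    have h4 : |c (x - x') i| = 0 := by
      have h5 := hle_nuu (x - x') i hi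
      have h6 := abs_nonneg (c (x - x') i)
      linarith
    have h7 := abs_eq_zero.1 h4
    rw [hxx, hc_sub] at h7
    linarith [h7]
  -- Lipschitz bound for graph-function coordinates on D
  set Kc : NNReal := ⟨(d : ℝ) * M, by positivity⟩ with hKc
  have hKcR : (Kc : ℝ) = (d : ℝ) * M := rfl
  have hGlip : ∀ i : Fin d, LipschitzOnWith Kc (fun v => c (G v) i) D := by
    intro i
    refine LipschitzOnWith.of_dist_le_mul fun v hv w hw => ?_
    obtain ⟨x, hxS, hxv⟩ := hv
    obtain ⟨x', hx'S, hx'w⟩ := hw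
    have hvex : ∃ q, q ∈ S ∧ Pc (q - z) = v := ⟨x, hxS, hxv⟩
    have hwex : ∃ q, q ∈ S ∧ Pc (q - z) = w := ⟨x', hx'S, hx'w⟩
    have hGv : G v = Pu (hvex.choose - z) := by rw [hG]; simp only [dif_pos hvex]
    have hGw : G w = Pu (hwex.choose - z) := by rw [hG]; simp only [dif_pos hwex]
    obtain ⟨hq1, hq2⟩ := hvex.choose_spec
    obtain ⟨hq1', hq2'⟩ := hwex.choose_spec
    set a := hvex.choose
    set a' := hwex.choose
    by_cases hi : i ∈ τf
    · have h1 : c (G v) i = c (a - z) i := by rw [hGv, hcoPu]; simp [hi]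
      have h2 : c (G w) i = c (a' - z) i := by rw [hGw, hcoPu]; simp [hi]
      have haa : (a - z : EuclideanSpace ℝ (Fin d)) - (a' - z) = a - a' := by abel
      have h3 : dist (c (G v) i) (c (G w) i) = |c (a - a') i| := by
        rw [Real.dist_eq, h1, h2, ← hc_sub, haa]
      have h4 : |c (a - a') i| ≤ nuu (a - a') := hle_nuu _ _ hi
      have h5 : nuu (a - a') ≤ ncs (a - a') := cone a hq1 a' hq1'
      have h6 : ncs (a - a') = ∑ j ∈ σf, |c (v - w) j| := by
        rw [hncs]
        refine Finset.sum_congr rfl fun j hj => ?_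
        have e1 : c v j = c (a - z) j := by rw [← hq2, hcoPc]; simp [hj]
        have e2 : c w j = c (a' - z) j := by rw [← hq2', hcoPc]; simp [hj]
        calc |c (a - a') j| = |c ((a - z) - (a' - z)) j| := by rw [haa]
          _ = |c (a - z) j - c (a' - z) j| := by rw [hc_sub]
          _ = |c v j - c w j| := by rw [e1, e2]
          _ = |c (v - w) j| := by rw [hc_sub]
      have h7 : ∑ j ∈ σf, |c (v - w) j| ≤ (d : ℝ) * (M * ‖v - w‖) := hsum_le _ _
      calc dist (c (G v) i) (c (G w) i) = |c (a - a') i| := h3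
        _ ≤ (d : ℝ) * (M * ‖v - w‖) := by rw [h6] at h5; linarith
        _ ≤ (Kc : ℝ) * dist v w := by
            rw [hKcR, dist_eq_norm]; ring_nf; exact le_refl _
    · have h1 : c (G v) i = 0 := by rw [hGv, hcoPu]; simp [hi]
      have h2 : c (G w) i = 0 := by rw [hGw, hcoPu]; simp [hi]
      rw [h1, h2, dist_self]
      positivity
  -- extend coordinatewise (McShane)
  have hext : ∀ i : Fin d, ∃ g : EuclideanSpace ℝ (Fin d) → ℝ, LipschitzWith Kc g ∧
      Set.EqOn (fun v => c (G v) i) g D := fun i => (hGlip i).extend_real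
  choose φ hφlip hφeq using hext
  -- the graph map into the ambient space
  set Ψ' : EuclideanSpace ℝ (Fin d) → EuclideanSpace ℝ (Fin d) :=
    fun v => ∑ i ∈ τf, φ i v • b i with hΨ'
  have hΨ'mem : ∀ v, Ψ' v ∈ Submodule.span ℝ (b '' {i : Fin d | 1 < |lam i|}) := by
    intro v
    refine Submodule.sum_mem _ fun i hi => Submodule.smul_mem _ _ ?_
    exact Submodule.subset_span ⟨i, (hmemτ i).1 hi, rfl⟩
  have hΨ'lip : ∀ v w : EuclideanSpace ℝ (Fin d),
      ‖Ψ' v - Ψ' w‖ ≤ ((Kc : ℝ) * ∑ j, ‖b j‖) * ‖v - w‖ := by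
    intro v w
    have h1 : Ψ' v - Ψ' w = ∑ i ∈ τf, (φ i v - φ i w) • b i := by
      rw [hΨ']
      simp only
      rw [← Finset.sum_sub_distrib]
      exact Finset.sum_congr rfl fun i _ => (sub_smul _ _ _).symm
    have h2 : ∑ i ∈ τf, ‖b i‖ ≤ ∑ j, ‖b j‖ :=
      Finset.sum_le_sum_of_subset_of_nonneg (Finset.subset_univ τf)
        (fun j _ _ => norm_nonneg _)
    calc ‖Ψ' v - Ψ' w‖ = ‖∑ i ∈ τf, (φ i v - φ i w) • b i‖ := by rw [h1]
      _ ≤ ∑ i ∈ τf, ‖(φ i v - φ i w) • b i‖ := norm_sum_le _ _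
      _ ≤ ∑ i ∈ τf, (Kc : ℝ) * ‖v - w‖ * ‖b i‖ := by
          refine Finset.sum_le_sum fun i _ => ?_
          rw [norm_smul, Real.norm_eq_abs]
          refine mul_le_mul_of_nonneg_right ?_ (norm_nonneg _)
          have h3 := (hφlip i).dist_le_mul v w
          rw [Real.dist_eq, dist_eq_norm] at h3
          exact h3
      _ = (Kc : ℝ) * ‖v - w‖ * ∑ i ∈ τf, ‖b i‖ := by rw [← Finset.mul_sum]
      _ ≤ (Kc : ℝ) * ‖v - w‖ * ∑ j, ‖b j‖ :=
          mul_le_mul_of_nonneg_left h2 (mul_nonneg Kc.coe_nonneg (norm_nonneg _))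
      _ = ((Kc : ℝ) * ∑ j, ‖b j‖) * ‖v - w‖ := by ring
  -- assemble Ψ
  refine ⟨fun p => ⟨Ψ' (p : EuclideanSpace ℝ (Fin d)), hΨ'mem _⟩, ⟨⟨(Kc : ℝ) * ∑ j, ‖b j‖,
    by positivity⟩, ?_⟩, ?_⟩
  · refine LipschitzWith.of_dist_le_mul fun p q => ?_
    have h1 : dist (⟨Ψ' (p : EuclideanSpace ℝ (Fin d)), hΨ'mem _⟩ :
        (Submodule.span ℝ (b '' {i : Fin d | 1 < |lam i|}) :
          Submodule ℝ (EuclideanSpace ℝ (Fin d))))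
        ⟨Ψ' (q : EuclideanSpace ℝ (Fin d)), hΨ'mem _⟩
        = ‖Ψ' (p : EuclideanSpace ℝ (Fin d)) - Ψ' (q : EuclideanSpace ℝ (Fin d))‖ := by
      rw [Subtype.dist_eq, dist_eq_norm]
    rw [h1, Subtype.dist_eq, dist_eq_norm]
    exact hΨ'lip _ _
  · intro x hx
    have hxS : x ∈ S := hx
    refine ⟨⟨Pc (x - z), ?_⟩, ?_⟩
    · refine Submodule.sum_mem _ fun i hi => Submodule.smul_mem _ _ ?_
      exact Submodule.subset_span ⟨i, (hmemσ i).1 hi, rfl⟩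
    · show x - z = Pc (x - z) + Ψ' (Pc (x - z))
      have hvD : Pc (x - z) ∈ D := ⟨x, hxS, rfl⟩
      have h1 : ∀ i ∈ τf, φ i (Pc (x - z)) = c (x - z) i := by
        intro i hi
        have h2 : φ i (Pc (x - z)) = c (G (Pc (x - z))) i := (hφeq i hvD).symm
        have hvex : ∃ q, q ∈ S ∧ Pc (q - z) = Pc (x - z) := ⟨x, hxS, rfl⟩
        have hGv : G (Pc (x - z)) = Pu (hvex.choose - z) := by
          rw [hG]; simp only [dif_pos hvex]
        obtain ⟨hq1, hq2⟩ := hvex.choose_spec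
        have h3 : c (G (Pc (x - z))) i = c (hvex.choose - z) i := by
          rw [hGv, hcoPu]; simp [hi]
        have h4 := hrigid hvex.choose hq1 x hxS hq2 i hi
        rw [h2, h3, h4]
      have h5 : Ψ' (Pc (x - z)) = Pu (x - z) := by
        rw [hΨ', hPu]
        simp only
        exact Finset.sum_congr rfl fun i hi => by rw [h1 i hi]
      rw [h5, hsplit]
end
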